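/- arXiv:2411.08500 — 6 statements merged into one kernel-verified Lean document; each statement's English description precedes it below -/
import Mathlib

section
/- Let a ∈ O be nonzero with n(a) = 0 and let c ∈ O. Then the equation a·x = c has a solution x ∈ O if and only if ā·c = 0. -/
open Matrix

/-- Split octonions over `F`, written in coordinates: an octonion `(α, u; v, β)` with
`u, v ∈ F³` is the vector `(α, u₁, u₂, u₃, v₁, v₂, v₃, β) ∈ F⁸`
(coordinate `0` is `α`, coordinates `1,2,3` are `u`, coordinates `4,5,6` are `v`,
coordinate `7` is `β`). -/
abbrev Octo (F : Type*) := Fin 8 → F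

variable {F : Type*} [Field F]

/-- Zorn vector-matrix multiplication of split octonions:
`(α, u; v, β)·(α', u'; v', β') =
 (αα' + u·v', αu' + β'u − v×v'; α'v + βv' + u×u', ββ' + v·u')`. -/
def octMul (x y : Octo F) : Octo F :=
  ![x 0 * y 0 + (x 1 * y 4 + x 2 * y 5 + x 3 * y 6),
    x 0 * y 1 + y 7 * x 1 - (x 5 * y 6 - x 6 * y 5),
    x 0 * y 2 + y 7 * x 2 - (x 6 * y 4 - x 4 * y 6),
    x 0 * y 3 + y 7 * x 3 - (x 4 * y 5 - x 5 * y 4),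
    y 0 * x 4 + x 7 * y 4 + (x 2 * y 3 - x 3 * y 2),
    y 0 * x 5 + x 7 * y 5 + (x 3 * y 1 - x 1 * y 3),
    y 0 * x 6 + x 7 * y 6 + (x 1 * y 2 - x 2 * y 1),
    x 7 * y 7 + (x 4 * y 1 + x 5 * y 2 + x 6 * y 3)]

/-- Conjugation of split octonions: `(α, u; v, β) ↦ (β, −u; −v, α)`. -/
def octConj (x : Octo F) : Octo F :=
  ![x 7, -(x 1), -(x 2), -(x 3), -(x 4), -(x 5), -(x 6), x 0]

/-- The norm `n(a) = αβ − u·v` of a split octonion. -/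
def octNorm (x : Octo F) : F := x 0 * x 7 - (x 1 * x 4 + x 2 * x 5 + x 3 * x 6)

/-- The trace `tr(a) = α + β` of a split octonion. -/
def octTr (x : Octo F) : F := x 0 + x 7

/-- The unit octonion `1 = (1, 0; 0, 1)`. -/
def octOne : Octo F := ![1, 0, 0, 0, 0, 0, 0, 1]

def octE1 : Octo F := ![1, 0, 0, 0, 0, 0, 0, 0]
def octE2 : Octo F := ![0, 0, 0, 0, 0, 0, 0, 1]
def octU1 : Octo F := ![0, 1, 0, 0, 0, 0, 0, 0]
def octU2 : Octo F := ![0, 0, 1, 0, 0, 0, 0, 0]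
def octU3 : Octo F := ![0, 0, 0, 1, 0, 0, 0, 0]
def octV1 : Octo F := ![0, 0, 0, 0, 1, 0, 0, 0]
def octV2 : Octo F := ![0, 0, 0, 0, 0, 1, 0, 0]
def octV3 : Octo F := ![0, 0, 0, 0, 0, 0, 1, 0]

/-- `g` is an automorphism of the split octonion algebra: an `F`-linear bijection
preserving the multiplication. -/
def IsOctAut (g : Octo F ≃ₗ[F] Octo F) : Prop :=
  ∀ x y : Octo F, g (octMul x y) = octMul (g x) (g y)

/-- `X ∈ Ω_d`: `X` is a `d`-dimensional affine subspace (flat) of `O ≅ F⁸`,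
i.e. `X = V + a` for an `F`-linear subspace `V` of dimension `d` and some `a`. -/
def IsFlat (d : ℕ) (X : Set (Octo F)) : Prop :=
  ∃ (V : Submodule F (Octo F)) (a : Octo F),
    Module.finrank F V = d ∧ X = (fun v => v + a) '' (V : Set (Octo F))

@[simp] lemma octMul_apply_0 (x y : Octo F) : octMul x y 0 = x 0 * y 0 + (x 1 * y 4 + x 2 * y 5 + x 3 * y 6) := rfl
@[simp] lemma octMul_apply_1 (x y : Octo F) : octMul x y 1 = x 0 * y 1 + y 7 * x 1 - (x 5 * y 6 - x 6 * y 5) := rfl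
@[simp] lemma octMul_apply_2 (x y : Octo F) : octMul x y 2 = x 0 * y 2 + y 7 * x 2 - (x 6 * y 4 - x 4 * y 6) := rfl
@[simp] lemma octMul_apply_3 (x y : Octo F) : octMul x y 3 = x 0 * y 3 + y 7 * x 3 - (x 4 * y 5 - x 5 * y 4) := rfl
@[simp] lemma octMul_apply_4 (x y : Octo F) : octMul x y 4 = y 0 * x 4 + x 7 * y 4 + (x 2 * y 3 - x 3 * y 2) := rfl
@[simp] lemma octMul_apply_5 (x y : Octo F) : octMul x y 5 = y 0 * x 5 + x 7 * y 5 + (x 3 * y 1 - x 1 * y 3) := rfl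
@[simp] lemma octMul_apply_6 (x y : Octo F) : octMul x y 6 = y 0 * x 6 + x 7 * y 6 + (x 1 * y 2 - x 2 * y 1) := rfl
@[simp] lemma octMul_apply_7 (x y : Octo F) : octMul x y 7 = x 7 * y 7 + (x 4 * y 1 + x 5 * y 2 + x 6 * y 3) := rfl
@[simp] lemma octConj_apply_0 (x : Octo F) : octConj x 0 = x 7 := rfl
@[simp] lemma octConj_apply_1 (x : Octo F) : octConj x 1 = -(x 1) := rfl
@[simp] lemma octConj_apply_2 (x : Octo F) : octConj x 2 = -(x 2) := rfl
@[simp] lemma octConj_apply_3 (x : Octo F) : octConj x 3 = -(x 3) := rfl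
@[simp] lemma octConj_apply_4 (x : Octo F) : octConj x 4 = -(x 4) := rfl
@[simp] lemma octConj_apply_5 (x : Octo F) : octConj x 5 = -(x 5) := rfl
@[simp] lemma octConj_apply_6 (x : Octo F) : octConj x 6 = -(x 6) := rfl
@[simp] lemma octConj_apply_7 (x : Octo F) : octConj x 7 = x 0 := rfl

def octBil (a b : Octo F) : F :=
  a 0 * b 7 + a 7 * b 0 - (a 1 * b 4 + a 4 * b 1 + a 2 * b 5 + a 5 * b 2 + a 3 * b 6 + a 6 * b 3)

lemma octConj_mul_mul (a x : Octo F) :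
    octMul (octConj a) (octMul a x) = octNorm a • x := by
  funext i
  fin_cases i <;>
    simp [octNorm] <;> ring

lemma octKey (a b z : Octo F) :
    octMul a (octMul (octConj b) z) + octMul b (octMul (octConj a) z) = octBil a b • z := by
  funext i
  fin_cases i <;>
    simp [octBil] <;> ring

lemma octMul_smul (a : Octo F) (r : F) (y : Octo F) :
    octMul a (r • y) = r • octMul a y := by
  funext i
  fin_cases i <;>
    simp <;> ring

lemma bil_octE2 (a : Octo F) : octBil a octE2 = a 0 := by
  show a 0 * 1 + a 7 * 0 - (a 1 * 0 + a 4 * 0 + a 2 * 0 + a 5 * 0 + a 3 * 0 + a 6 * 0) = a 0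
  ring
lemma bil_octE1 (a : Octo F) : octBil a octE1 = a 7 := by
  show a 0 * 0 + a 7 * 1 - (a 1 * 0 + a 4 * 0 + a 2 * 0 + a 5 * 0 + a 3 * 0 + a 6 * 0) = a 7
  ring
lemma bil_octV1 (a : Octo F) : octBil a octV1 = -(a 1) := by
  show a 0 * 0 + a 7 * 0 - (a 1 * 1 + a 4 * 0 + a 2 * 0 + a 5 * 0 + a 3 * 0 + a 6 * 0) = -(a 1)
  ring
lemma bil_octV2 (a : Octo F) : octBil a octV2 = -(a 2) := by
  show a 0 * 0 + a 7 * 0 - (a 1 * 0 + a 4 * 0 + a 2 * 1 + a 5 * 0 + a 3 * 0 + a 6 * 0) = -(a 2)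
  ring
lemma bil_octV3 (a : Octo F) : octBil a octV3 = -(a 3) := by
  show a 0 * 0 + a 7 * 0 - (a 1 * 0 + a 4 * 0 + a 2 * 0 + a 5 * 0 + a 3 * 1 + a 6 * 0) = -(a 3)
  ring
lemma bil_octU1 (a : Octo F) : octBil a octU1 = -(a 4) := by
  show a 0 * 0 + a 7 * 0 - (a 1 * 0 + a 4 * 1 + a 2 * 0 + a 5 * 0 + a 3 * 0 + a 6 * 0) = -(a 4)
  ring
lemma bil_octU2 (a : Octo F) : octBil a octU2 = -(a 5) := by
  show a 0 * 0 + a 7 * 0 - (a 1 * 0 + a 4 * 0 + a 2 * 0 + a 5 * 1 + a 3 * 0 + a 6 * 0) = -(a 5)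
  ring
lemma bil_octU3 (a : Octo F) : octBil a octU3 = -(a 6) := by
  show a 0 * 0 + a 7 * 0 - (a 1 * 0 + a 4 * 0 + a 2 * 0 + a 5 * 0 + a 3 * 0 + a 6 * 1) = -(a 6)
  ring

lemma octBil_exists (a : Octo F) (ha : a ≠ 0) : ∃ b : Octo F, octBil a b ≠ 0 := by
  obtain ⟨i, hi⟩ := Function.ne_iff.mp ha
  simp only [Pi.zero_apply] at hi
  fin_cases i
  · exact ⟨octE2, by rw [bil_octE2]; simpa using hi⟩
  · exact ⟨octV1, by rw [bil_octV1]; simpa using hi⟩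
  · exact ⟨octV2, by rw [bil_octV2]; simpa using hi⟩
  · exact ⟨octV3, by rw [bil_octV3]; simpa using hi⟩
  · exact ⟨octU1, by rw [bil_octU1]; simpa using hi⟩
  · exact ⟨octU2, by rw [bil_octU2]; simpa using hi⟩
  · exact ⟨octU3, by rw [bil_octU3]; simpa using hi⟩
  · exact ⟨octE1, by rw [bil_octE1]; simpa using hi⟩

lemma octMul_zero_right (b : Octo F) : octMul b (0 : Octo F) = 0 := by
  funext i
  fin_cases i <;>
    simp

/-- For nonzero `a` of norm zero, the equation `a·x = c` has a solution iff `ā·c = 0`. -/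
theorem stmt_6 [IsAlgClosed F] (a c : Octo F) (ha₀ : a ≠ 0) (ha : octNorm a = 0) :
    (∃ x : Octo F, octMul a x = c) ↔ octMul (octConj a) c = 0 := by
  constructor
  · rintro ⟨x, rfl⟩
    rw [octConj_mul_mul, ha, zero_smul]
  · intro hc
    obtain ⟨b, hb⟩ := octBil_exists a ha₀
    refine ⟨(octBil a b)⁻¹ • octMul (octConj b) c, ?_⟩
    have h := octKey a b c
    rw [hc, octMul_zero_right, add_zero] at h
    rw [octMul_smul, h, smul_smul, inv_mul_cancel₀ hb, one_smul]
end

section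
/- Let α₁, β₁, β₈ ∈ F with α₁ ≠ 0, β₁β₈ = 0 and (β₁, β₈) ≠ (0, 0); set a = α₁·e₁ and b = β₁e₁ + β₈e₂, and let c ∈ O. (1) If β₈ ≠ 0, then the equation (a·x)·b = c has a solution if and only if c = γ₂u₁ + γ₃u₂ + γ₄u₃ for some γ₂, γ₃, γ₄ ∈ F, in which case the set of all solutions is exactly {x = (x₁, γ₂/(α₁β₈), γ₃/(α₁β₈), γ₄/(α₁β₈), x₅, x₆, x₇, x₈) : x₁, x₅, x₆, x₇, x₈ ∈ F}. (2) If β₁ ≠ 0, then (a·x)·b = c has a solution if and only if c = γ₁·e₁ for some γ₁ ∈ F, in which case the set of all solutions is exactly {x = (γ₁/(α₁β₁), x₂, x₃, x₄, x₅, x₆, x₇, x₈) : x₂, ..., x₈ ∈ F}. -/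
open Matrix

variable {F : Type*} [Field F]

/-! Left multiplication by `e₁` keeps the `(α, u)` part of `x` and kills `(v, β)`; right
multiplication by the diagonal element `β₁e₁ + β₈e₂` then scales `α` by `β₁` and `u` by `β₈`.
Hence `(α₁e₁·x)·b = (α₁β₁x₁, α₁β₈(x₂, x₃, x₄); 0, 0)`, and since `β₁β₈ = 0` exactly one of the
two blocks survives, giving a diagonal linear system in the remaining coordinates. -/

lemma octMul_smul_octE1_left (α : F) (x : Octo F) :
    octMul (α • octE1) x = ![α * x 0, α * x 1, α * x 2, α * x 3, 0, 0, 0, 0] := by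
  ext i; fin_cases i <;> simp [octMul, octE1]

lemma octMul_smul_octE1_add_smul_octE2_right (y : Octo F) (β₁ β₈ : F) :
    octMul y (β₁ • octE1 + β₈ • octE2) =
      ![β₁ * y 0, β₈ * y 1, β₈ * y 2, β₈ * y 3, β₁ * y 4, β₁ * y 5, β₁ * y 6, β₈ * y 7] := by
  ext i; fin_cases i <;> simp [octMul, octE1, octE2] <;> ring

lemma octMul_octMul_smul_octE1 (α β₁ β₈ : F) (x : Octo F) :
    octMul (octMul (α • octE1) x) (β₁ • octE1 + β₈ • octE2) =
      ![α * β₁ * x 0, α * β₈ * x 1, α * β₈ * x 2, α * β₈ * x 3, 0, 0, 0, 0] := by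
  rw [octMul_smul_octE1_left, octMul_smul_octE1_add_smul_octE2_right]
  simp only [cons_val, mul_zero]
  ring_nf

lemma smul_octE1_eq_vec (γ₁ : F) : γ₁ • octE1 = (![γ₁, 0, 0, 0, 0, 0, 0, 0] : Octo F) := by
  ext i; fin_cases i <;> simp [octE1]

lemma smul_octU_add_eq_vec (γ₂ γ₃ γ₄ : F) :
    γ₂ • octU1 + γ₃ • octU2 + γ₄ • octU3 = (![0, γ₂, γ₃, γ₄, 0, 0, 0, 0] : Octo F) := by
  ext i; fin_cases i <;> simp [octU1, octU2, octU3]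

section
variable {α : Type*}

lemma exists_eq_vec8_with_coords_123_iff (x : Fin 8 → α) (p q r : α) :
    (∃ x₁ x₅ x₆ x₇ x₈, x = ![x₁, p, q, r, x₅, x₆, x₇, x₈]) ↔ x 1 = p ∧ x 2 = q ∧ x 3 = r := by
  refine ⟨?_, fun ⟨h1, h2, h3⟩ => ⟨x 0, x 4, x 5, x 6, x 7, ?_⟩⟩
  · rintro ⟨_, _, _, _, _, rfl⟩
    simp
  · ext i; fin_cases i <;> simp [h1, h2, h3]

lemma exists_eq_vec8_with_coord_0_iff (x : Fin 8 → α) (p : α) :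
    (∃ x₂ x₃ x₄ x₅ x₆ x₇ x₈, x = ![p, x₂, x₃, x₄, x₅, x₆, x₇, x₈]) ↔ x 0 = p := by
  refine ⟨?_, fun h0 => ⟨x 1, x 2, x 3, x 4, x 5, x 6, x 7, ?_⟩⟩
  · rintro ⟨_, _, _, _, _, _, _, rfl⟩
    simp
  · ext i; fin_cases i <;> simp [h0]

end

section
variable {α β₁ β₈ : F}

lemma octMul_octMul_eq_smul_octU_iff (hα : α ≠ 0) (hβ₁ : β₁ = 0) (hβ₈ : β₈ ≠ 0)
    (γ₂ γ₃ γ₄ : F) (x : Octo F) :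
    octMul (octMul (α • octE1) x) (β₁ • octE1 + β₈ • octE2) =
        γ₂ • octU1 + γ₃ • octU2 + γ₄ • octU3 ↔
      x 1 = γ₂ / (α * β₈) ∧ x 2 = γ₃ / (α * β₈) ∧ x 3 = γ₄ / (α * β₈) := by
  rw [octMul_octMul_smul_octE1, smul_octU_add_eq_vec, hβ₁]
  simp [vecCons_inj, eq_div_iff (mul_ne_zero hα hβ₈), mul_comm]

lemma octMul_octMul_eq_smul_octE1_iff (hα : α ≠ 0) (hβ₁ : β₁ ≠ 0) (hβ₈ : β₈ = 0)
    (γ₁ : F) (x : Octo F) :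
    octMul (octMul (α • octE1) x) (β₁ • octE1 + β₈ • octE2) = γ₁ • octE1 ↔
      x 0 = γ₁ / (α * β₁) := by
  rw [octMul_octMul_smul_octE1, smul_octE1_eq_vec, hβ₈]
  simp [vecCons_inj, eq_div_iff (mul_ne_zero hα hβ₁), mul_comm]

end

theorem stmt_10_general (α₁ β₁ β₈ : F) (hα : α₁ ≠ 0) (hββ : β₁ * β₈ = 0) (c : Octo F) :
    (β₈ ≠ 0 →
      ((∃ x : Octo F, octMul (octMul (α₁ • octE1) x) (β₁ • octE1 + β₈ • octE2) = c) ↔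
        ∃ γ₂ γ₃ γ₄ : F, c = γ₂ • octU1 + γ₃ • octU2 + γ₄ • octU3) ∧
      ∀ γ₂ γ₃ γ₄ : F, c = γ₂ • octU1 + γ₃ • octU2 + γ₄ • octU3 →
        {x : Octo F | octMul (octMul (α₁ • octE1) x) (β₁ • octE1 + β₈ • octE2) = c} =
          {x : Octo F | ∃ x₁ x₅ x₆ x₇ x₈ : F,
            x = ![x₁, γ₂ / (α₁ * β₈), γ₃ / (α₁ * β₈), γ₄ / (α₁ * β₈), x₅, x₆, x₇, x₈]}) ∧
    (β₁ ≠ 0 →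
      ((∃ x : Octo F, octMul (octMul (α₁ • octE1) x) (β₁ • octE1 + β₈ • octE2) = c) ↔
        ∃ γ₁ : F, c = γ₁ • octE1) ∧
      ∀ γ₁ : F, c = γ₁ • octE1 →
        {x : Octo F | octMul (octMul (α₁ • octE1) x) (β₁ • octE1 + β₈ • octE2) = c} =
          {x : Octo F | ∃ x₂ x₃ x₄ x₅ x₆ x₇ x₈ : F,
            x = ![γ₁ / (α₁ * β₁), x₂, x₃, x₄, x₅, x₆, x₇, x₈]}) := by
  refine ⟨fun hβ₈ => ?_, fun hβ₁ => ?_⟩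
  · have hβ₁ : β₁ = 0 := (mul_eq_zero.mp hββ).resolve_right hβ₈
    have hsol := octMul_octMul_eq_smul_octU_iff hα hβ₁ hβ₈
    refine ⟨⟨?_, ?_⟩, ?_⟩
    · rintro ⟨x, rfl⟩
      refine ⟨α₁ * β₈ * x 1, α₁ * β₈ * x 2, α₁ * β₈ * x 3, ?_⟩
      rw [octMul_octMul_smul_octE1, smul_octU_add_eq_vec, hβ₁, mul_zero, zero_mul]
    · rintro ⟨γ₂, γ₃, γ₄, rfl⟩
      exact ⟨_, (hsol γ₂ γ₃ γ₄ ![0, _, _, _, 0, 0, 0, 0]).2 ⟨rfl, rfl, rfl⟩⟩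
    · rintro γ₂ γ₃ γ₄ rfl
      ext x
      exact (hsol γ₂ γ₃ γ₄ x).trans (exists_eq_vec8_with_coords_123_iff x _ _ _).symm
  · have hβ₈ : β₈ = 0 := (mul_eq_zero.mp hββ).resolve_left hβ₁
    have hsol := octMul_octMul_eq_smul_octE1_iff hα hβ₁ hβ₈
    refine ⟨⟨?_, ?_⟩, ?_⟩
    · rintro ⟨x, rfl⟩
      exact ⟨α₁ * β₁ * x 0, by rw [octMul_octMul_smul_octE1, smul_octE1_eq_vec, hβ₈]; simp⟩
    · rintro ⟨γ₁, rfl⟩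
      exact ⟨_, (hsol γ₁ ![_, 0, 0, 0, 0, 0, 0, 0]).2 rfl⟩
    · rintro γ₁ rfl
      ext x
      exact (hsol γ₁ x).trans (exists_eq_vec8_with_coord_0_iff x _).symm

/-- Case (V) of Theorem 5.1: solutions of `(a·x)·b = c` for `a = α₁·e₁`,
`b = β₁e₁ + β₈e₂` with `α₁ ≠ 0`, `β₁β₈ = 0`, `(β₁, β₈) ≠ (0, 0)`. -/
theorem stmt_10 [IsAlgClosed F] (α₁ β₁ β₈ : F) (hα : α₁ ≠ 0) (hββ : β₁ * β₈ = 0)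
    (hne : (β₁, β₈) ≠ (0, 0)) (c : Octo F) :
    (β₈ ≠ 0 →
      ((∃ x : Octo F, octMul (octMul (α₁ • octE1) x) (β₁ • octE1 + β₈ • octE2) = c) ↔
        ∃ γ₂ γ₃ γ₄ : F, c = γ₂ • octU1 + γ₃ • octU2 + γ₄ • octU3) ∧
      ∀ γ₂ γ₃ γ₄ : F, c = γ₂ • octU1 + γ₃ • octU2 + γ₄ • octU3 →
        {x : Octo F | octMul (octMul (α₁ • octE1) x) (β₁ • octE1 + β₈ • octE2) = c} =
          {x : Octo F | ∃ x₁ x₅ x₆ x₇ x₈ : F,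
            x = ![x₁, γ₂ / (α₁ * β₈), γ₃ / (α₁ * β₈), γ₄ / (α₁ * β₈), x₅, x₆, x₇, x₈]}) ∧
    (β₁ ≠ 0 →
      ((∃ x : Octo F, octMul (octMul (α₁ • octE1) x) (β₁ • octE1 + β₈ • octE2) = c) ↔
        ∃ γ₁ : F, c = γ₁ • octE1) ∧
      ∀ γ₁ : F, c = γ₁ • octE1 →
        {x : Octo F | octMul (octMul (α₁ • octE1) x) (β₁ • octE1 + β₈ • octE2) = c} =
          {x : Octo F | ∃ x₂ x₃ x₄ x₅ x₆ x₇ x₈ : F,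
            x = ![γ₁ / (α₁ * β₁), x₂, x₃, x₄, x₅, x₆, x₇, x₈]}) :=
  stmt_10_general α₁ β₁ β₈ hα hββ c
end

section
/- If a, b ∈ O satisfy n(a) = n(b) = 0 and the equation (a·x)·b = c has a solution x ∈ O for some c ∈ O, then c·b̄ = 0. The converse fails: there exist a, b ∈ O with n(a) = n(b) = 0 and c ∈ O with c·b̄ = 0 such that (a·x)·b = c has no solution (for example a = e₁, b = u₁, c = e₂). -/
open Matrix

variable {F : Type*} [Field F]

@[simp] lemma vec8_at0 (a0 a1 a2 a3 a4 a5 a6 a7 : F) :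
    ![a0,a1,a2,a3,a4,a5,a6,a7] (0:Fin 8) = a0 := rfl
@[simp] lemma vec8_at1 (a0 a1 a2 a3 a4 a5 a6 a7 : F) :
    ![a0,a1,a2,a3,a4,a5,a6,a7] (1:Fin 8) = a1 := rfl
@[simp] lemma vec8_at2 (a0 a1 a2 a3 a4 a5 a6 a7 : F) :
    ![a0,a1,a2,a3,a4,a5,a6,a7] (2:Fin 8) = a2 := rfl
@[simp] lemma vec8_at3 (a0 a1 a2 a3 a4 a5 a6 a7 : F) :
    ![a0,a1,a2,a3,a4,a5,a6,a7] (3:Fin 8) = a3 := rfl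
@[simp] lemma vec8_at4 (a0 a1 a2 a3 a4 a5 a6 a7 : F) :
    ![a0,a1,a2,a3,a4,a5,a6,a7] (4:Fin 8) = a4 := rfl
@[simp] lemma vec8_at5 (a0 a1 a2 a3 a4 a5 a6 a7 : F) :
    ![a0,a1,a2,a3,a4,a5,a6,a7] (5:Fin 8) = a5 := rfl
@[simp] lemma vec8_at6 (a0 a1 a2 a3 a4 a5 a6 a7 : F) :
    ![a0,a1,a2,a3,a4,a5,a6,a7] (6:Fin 8) = a6 := rfl
@[simp] lemma vec8_at7 (a0 a1 a2 a3 a4 a5 a6 a7 : F) :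
    ![a0,a1,a2,a3,a4,a5,a6,a7] (7:Fin 8) = a7 := rfl

lemma mul_mul_conj (y b : Octo F) :
    octMul (octMul y b) (octConj b) = fun i => octNorm b * y i := by
  funext i
  fin_cases i <;>
    simp [octMul, octConj, octNorm, Matrix.cons_val_zero, Matrix.cons_val_one] <;> ring

/-- If `n(a) = n(b) = 0` and `(a·x)·b = c` has a solution, then `c·b̄ = 0`; the converse
fails. -/
theorem stmt_13 [IsAlgClosed F] :
    (∀ a b c x : Octo F, octNorm a = 0 → octNorm b = 0 →
      octMul (octMul a x) b = c → octMul c (octConj b) = 0) ∧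
    (∃ a b c : Octo F, octNorm a = 0 ∧ octNorm b = 0 ∧ octMul c (octConj b) = 0 ∧
      ¬ ∃ x : Octo F, octMul (octMul a x) b = c) := by
  constructor
  · intro a b c x ha hb h
    subst h
    rw [mul_mul_conj]
    funext i
    simp [hb]
  · refine ⟨octE1, octU1, octE2, ?_, ?_, ?_, ?_⟩
    · simp [octNorm, octE1]
    · simp [octNorm, octU1]
    · funext i
      fin_cases i <;> simp [octMul, octConj, octE2, octU1]
    · rintro ⟨x, hx⟩
      have := congrFun hx 7
      simp [octMul, octE1, octU1, octE2] at this
end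

section
/- Let α₁, β₁, β₈ ∈ F with α₁ ≠ 0, β₁β₈ = 0 and (β₁, β₈) ≠ (0, 0); set a = α₁·e₁ and b = β₁e₁ + β₈e₂, and let c ∈ O. (1) If β₈ ≠ 0, then the equation a·(b·x) = c has a solution if and only if c = 0, in which case every x ∈ O is a solution. (2) If β₁ ≠ 0, then a·(b·x) = c has a solution if and only if c = (γ₁, γ₂, γ₃, γ₄, 0, 0, 0, 0) for some γ₁, γ₂, γ₃, γ₄ ∈ F, in which case the set of all solutions is exactly {x = (γ₁/(α₁β₁), γ₂/(α₁β₁), γ₃/(α₁β₁), γ₄/(α₁β₁), x₅, x₆, x₇, x₈) : x₅, x₆, x₇, x₈ ∈ F}. -/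
open Matrix

variable {F : Type*} [Field F]

lemma vec8_5 {α : Type*} (a b c d e f g h : α) : (![a,b,c,d,e,f,g,h] : Fin 8 → α) 5 = f := rfl
lemma vec8_6 {α : Type*} (a b c d e f g h : α) : (![a,b,c,d,e,f,g,h] : Fin 8 → α) 6 = g := rfl
lemma vec8_7 {α : Type*} (a b c d e f g h : α) : (![a,b,c,d,e,f,g,h] : Fin 8 → α) 7 = h := rfl

lemma octMul_apply (x y : Octo F) (i : Fin 8) : octMul x y i =
    (![x 0 * y 0 + (x 1 * y 4 + x 2 * y 5 + x 3 * y 6),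
    x 0 * y 1 + y 7 * x 1 - (x 5 * y 6 - x 6 * y 5),
    x 0 * y 2 + y 7 * x 2 - (x 6 * y 4 - x 4 * y 6),
    x 0 * y 3 + y 7 * x 3 - (x 4 * y 5 - x 5 * y 4),
    y 0 * x 4 + x 7 * y 4 + (x 2 * y 3 - x 3 * y 2),
    y 0 * x 5 + x 7 * y 5 + (x 3 * y 1 - x 1 * y 3),
    y 0 * x 6 + x 7 * y 6 + (x 1 * y 2 - x 2 * y 1),
    x 7 * y 7 + (x 4 * y 1 + x 5 * y 2 + x 6 * y 3)] : Octo F) i := rfl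

lemma octKey_s14 (α₁ β₁ β₈ : F) (x : Octo F) :
    octMul (α₁ • octE1) (octMul (β₁ • octE1 + β₈ • octE2) x) =
      ![α₁ * (β₁ * x 0), α₁ * (β₁ * x 1), α₁ * (β₁ * x 2), α₁ * (β₁ * x 3),
        0, 0, 0, 0] := by
  have hb : (β₁ • octE1 + β₈ • octE2 : Octo F) = ![β₁, 0, 0, 0, 0, 0, 0, β₈] := by
    funext i
    fin_cases i <;> simp [octE1, octE2, vec8_5, vec8_6, vec8_7]
  have ha : (α₁ • octE1 : Octo F) = ![α₁, 0, 0, 0, 0, 0, 0, 0] := by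
    funext i
    fin_cases i <;> simp [octE1, vec8_5, vec8_6, vec8_7]
  rw [hb, ha]
  funext i
  fin_cases i <;> simp [octMul_apply, vec8_5, vec8_6, vec8_7]


/-- Case (V) of Theorem 6.1: solutions of `a·(b·x) = c` for `a = α₁·e₁`,
`b = β₁e₁ + β₈e₂` with `α₁ ≠ 0`, `β₁β₈ = 0`, `(β₁, β₈) ≠ (0, 0)`. -/
theorem stmt_14 [IsAlgClosed F] (α₁ β₁ β₈ : F) (hα : α₁ ≠ 0) (hββ : β₁ * β₈ = 0)
    (hne : (β₁, β₈) ≠ (0, 0)) (c : Octo F) :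
    (β₈ ≠ 0 →
      ((∃ x : Octo F, octMul (α₁ • octE1) (octMul (β₁ • octE1 + β₈ • octE2) x) = c) ↔
        c = 0) ∧
      (c = 0 → ∀ x : Octo F,
        octMul (α₁ • octE1) (octMul (β₁ • octE1 + β₈ • octE2) x) = c)) ∧
    (β₁ ≠ 0 →
      ((∃ x : Octo F, octMul (α₁ • octE1) (octMul (β₁ • octE1 + β₈ • octE2) x) = c) ↔
        ∃ γ₁ γ₂ γ₃ γ₄ : F, c = ![γ₁, γ₂, γ₃, γ₄, 0, 0, 0, 0]) ∧
      ∀ γ₁ γ₂ γ₃ γ₄ : F, c = ![γ₁, γ₂, γ₃, γ₄, 0, 0, 0, 0] →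
        {x : Octo F | octMul (α₁ • octE1) (octMul (β₁ • octE1 + β₈ • octE2) x) = c} =
          {x : Octo F | ∃ x₅ x₆ x₇ x₈ : F,
            x = ![γ₁ / (α₁ * β₁), γ₂ / (α₁ * β₁), γ₃ / (α₁ * β₁), γ₄ / (α₁ * β₁),
                  x₅, x₆, x₇, x₈]}) := by
  constructor
  · intro hβ₈
    have hβ₁ : β₁ = 0 := by
      rcases mul_eq_zero.mp hββ with h | h
      · exact h
      · exact absurd h hβ₈
    have hz : ∀ x : Octo F,
        octMul (α₁ • octE1) (octMul (β₁ • octE1 + β₈ • octE2) x) = 0 := by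
      intro x
      rw [octKey_s14, hβ₁]
      funext i
      fin_cases i <;> simp [vec8_5, vec8_6, vec8_7]
    constructor
    · constructor
      · rintro ⟨x, hx⟩
        rw [hz] at hx
        exact hx.symm
      · intro hc
        exact ⟨0, by rw [hz, hc]⟩
    · intro hc x
      rw [hz, hc]
  · intro hβ₁
    have hab : α₁ * β₁ ≠ 0 := mul_ne_zero hα hβ₁
    constructor
    · constructor
      · rintro ⟨x, hx⟩
        rw [octKey_s14] at hx
        exact ⟨_, _, _, _, hx.symm⟩
      · rintro ⟨γ₁, γ₂, γ₃, γ₄, hc⟩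
        refine ⟨![γ₁ / (α₁ * β₁), γ₂ / (α₁ * β₁), γ₃ / (α₁ * β₁), γ₄ / (α₁ * β₁),
          0, 0, 0, 0], ?_⟩
        rw [octKey_s14, hc]
        funext i
        fin_cases i <;> simp [vec8_5, vec8_6, vec8_7] <;> field_simp <;> ring
    · intro γ₁ γ₂ γ₃ γ₄ hc
      ext x
      simp only [Set.mem_setOf_eq, octKey_s14, hc]
      constructor
      · intro h
        refine ⟨x 4, x 5, x 6, x 7, ?_⟩
        have h0 : α₁ * (β₁ * x 0) = γ₁ := congrFun h 0
        have h1 : α₁ * (β₁ * x 1) = γ₂ := congrFun h 1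
        have h2 : α₁ * (β₁ * x 2) = γ₃ := congrFun h 2
        have h3 : α₁ * (β₁ * x 3) = γ₄ := congrFun h 3
        funext i
        fin_cases i <;>
          simp [vec8_5, vec8_6, vec8_7] <;>
          rw [eq_div_iff hab] <;>
          [linear_combination h0; linear_combination h1; linear_combination h2;
           linear_combination h3]
      · rintro ⟨x₅, x₆, x₇, x₈, hx⟩
        rw [hx]
        funext i
        fin_cases i <;> simp [vec8_5, vec8_6, vec8_7] <;> field_simp <;> ring
end

section
/- If a, b ∈ O satisfy n(a) = n(b) = 0 and the equation a·(b·x) = c has a solution x ∈ O for some c ∈ O, then ā·c = 0. The converse fails: there exist a, b ∈ O with n(a) = n(b) = 0 and c ∈ O with ā·c = 0 such that a·(b·x) = c has no solution (for example a = e₁, b = e₂, c = e₁). -/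
open Matrix

variable {F : Type*} [Field F]

section Aux
variable {F : Type*} [Field F]

lemma octoVal0 (a0 a1 a2 a3 a4 a5 a6 a7 : F) : ![a0,a1,a2,a3,a4,a5,a6,a7] 0 = a0 := rfl
lemma octoVal1 (a0 a1 a2 a3 a4 a5 a6 a7 : F) : ![a0,a1,a2,a3,a4,a5,a6,a7] 1 = a1 := rfl
lemma octoVal2 (a0 a1 a2 a3 a4 a5 a6 a7 : F) : ![a0,a1,a2,a3,a4,a5,a6,a7] 2 = a2 := rfl
lemma octoVal3 (a0 a1 a2 a3 a4 a5 a6 a7 : F) : ![a0,a1,a2,a3,a4,a5,a6,a7] 3 = a3 := rfl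
lemma octoVal4 (a0 a1 a2 a3 a4 a5 a6 a7 : F) : ![a0,a1,a2,a3,a4,a5,a6,a7] 4 = a4 := rfl
lemma octoVal5 (a0 a1 a2 a3 a4 a5 a6 a7 : F) : ![a0,a1,a2,a3,a4,a5,a6,a7] 5 = a5 := rfl
lemma octoVal6 (a0 a1 a2 a3 a4 a5 a6 a7 : F) : ![a0,a1,a2,a3,a4,a5,a6,a7] 6 = a6 := rfl
lemma octoVal7 (a0 a1 a2 a3 a4 a5 a6 a7 : F) : ![a0,a1,a2,a3,a4,a5,a6,a7] 7 = a7 := rfl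

lemma octoValM0 (a0 a1 a2 a3 a4 a5 a6 a7 : F) (h : (0:ℕ) < 8) : ![a0,a1,a2,a3,a4,a5,a6,a7] (⟨0,h⟩ : Fin 8) = a0 := rfl
lemma octoValM1 (a0 a1 a2 a3 a4 a5 a6 a7 : F) (h : (1:ℕ) < 8) : ![a0,a1,a2,a3,a4,a5,a6,a7] (⟨1,h⟩ : Fin 8) = a1 := rfl
lemma octoValM2 (a0 a1 a2 a3 a4 a5 a6 a7 : F) (h : (2:ℕ) < 8) : ![a0,a1,a2,a3,a4,a5,a6,a7] (⟨2,h⟩ : Fin 8) = a2 := rfl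
lemma octoValM3 (a0 a1 a2 a3 a4 a5 a6 a7 : F) (h : (3:ℕ) < 8) : ![a0,a1,a2,a3,a4,a5,a6,a7] (⟨3,h⟩ : Fin 8) = a3 := rfl
lemma octoValM4 (a0 a1 a2 a3 a4 a5 a6 a7 : F) (h : (4:ℕ) < 8) : ![a0,a1,a2,a3,a4,a5,a6,a7] (⟨4,h⟩ : Fin 8) = a4 := rfl
lemma octoValM5 (a0 a1 a2 a3 a4 a5 a6 a7 : F) (h : (5:ℕ) < 8) : ![a0,a1,a2,a3,a4,a5,a6,a7] (⟨5,h⟩ : Fin 8) = a5 := rfl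
lemma octoValM6 (a0 a1 a2 a3 a4 a5 a6 a7 : F) (h : (6:ℕ) < 8) : ![a0,a1,a2,a3,a4,a5,a6,a7] (⟨6,h⟩ : Fin 8) = a6 := rfl
lemma octoValM7 (a0 a1 a2 a3 a4 a5 a6 a7 : F) (h : (7:ℕ) < 8) : ![a0,a1,a2,a3,a4,a5,a6,a7] (⟨7,h⟩ : Fin 8) = a7 := rfl

lemma octKey_s17 (a y : Octo F) (ha : octNorm a = 0) :
    octMul (octConj a) (octMul a y) = 0 := by
  unfold octNorm at ha
  funext i
  fin_cases i <;>
    simp only [octMul, octConj, Pi.zero_apply, octoVal0, octoVal1, octoVal2, octoVal3,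
      octoVal4, octoVal5, octoVal6, octoVal7, octoValM0, octoValM1, octoValM2, octoValM3, octoValM4, octoValM5, octoValM6, octoValM7] <;>
    first
      | linear_combination y 0 * ha
      | linear_combination y 1 * ha
      | linear_combination y 2 * ha
      | linear_combination y 3 * ha
      | linear_combination y 4 * ha
      | linear_combination y 5 * ha
      | linear_combination y 6 * ha
      | linear_combination y 7 * ha

end Aux

/-- If `n(a) = n(b) = 0` and `a·(b·x) = c` has a solution, then `ā·c = 0`; the converse
fails. -/
theorem stmt_17 [IsAlgClosed F] :
    (∀ a b c x : Octo F, octNorm a = 0 → octNorm b = 0 →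
      octMul a (octMul b x) = c → octMul (octConj a) c = 0) ∧
    (∃ a b c : Octo F, octNorm a = 0 ∧ octNorm b = 0 ∧ octMul (octConj a) c = 0 ∧
      ¬ ∃ x : Octo F, octMul a (octMul b x) = c) := by
  constructor
  · intro a b c x ha hb hc
    subst hc
    exact octKey_s17 a (octMul b x) ha
  · refine ⟨octE1, octE2, octE1, ?_, ?_, ?_, ?_⟩
    · simp [octNorm, octE1, octoVal0, octoVal1, octoVal2, octoVal3, octoVal4, octoVal5,
        octoVal6, octoVal7]
    · simp [octNorm, octE2, octoVal0, octoVal1, octoVal2, octoVal3, octoVal4, octoVal5,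
        octoVal6, octoVal7]
    · funext i
      fin_cases i <;>
        simp [octMul, octConj, octE1, octoVal0, octoVal1, octoVal2, octoVal3, octoVal4,
          octoVal5, octoVal6, octoVal7]
    · rintro ⟨x, hx⟩
      have h0 : octMul octE1 (octMul octE2 x) 0 = octE1 0 := by rw [hx]
      simp [octMul, octE1, octE2, octoVal0, octoVal1, octoVal2, octoVal3, octoVal4,
        octoVal5, octoVal6, octoVal7] at h0
end

section
/- Let m ≥ 1, let a₁, ..., aₘ ∈ O be nonzero, let c ∈ O, let w(a₁, ..., aₘ, x) be a multilinear monomial in the letters a₁, ..., aₘ, x, and let X ⊆ O be the set of all x ∈ O with w(a₁, ..., aₘ, x) = c. Then exactly one of the following holds: (a) X is empty; (b) X has exactly one element; (c) X ∈ Ω_r for some r with 4 ≤ r ≤ 7; (d) X = O. Moreover, each of the conditions (a)–(d) occurs for some linear monomial equation, and X has exactly one element if and only if n(aᵢ) ≠ 0 for all i = 1, ..., m. -/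
open Matrix

variable {F : Type*} [Field F]

/-- Nonassociative words (elements of the free magma) in the letters `a₁, …, aₘ` and a
variable letter `x`. -/
inductive OctWord (m : ℕ) where
  | var : OctWord m
  | const : Fin m → OctWord m
  | mul : OctWord m → OctWord m → OctWord m

/-- Number of occurrences of the variable letter `x` in a word. -/
def OctWord.countVar {m : ℕ} : OctWord m → ℕ
  | .var => 1
  | .const _ => 0
  | .mul w₁ w₂ => w₁.countVar + w₂.countVar

/-- Number of occurrences of the letter `aᵢ` in a word. -/
def OctWord.countConst {m : ℕ} (i : Fin m) : OctWord m → ℕ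
  | .var => 0
  | .const j => if j = i then 1 else 0
  | .mul w₁ w₂ => w₁.countConst i + w₂.countConst i

/-- A multilinear monomial: each of the letters `a₁, …, aₘ, x` occurs exactly once. -/
def OctWord.Multilinear {m : ℕ} (w : OctWord m) : Prop :=
  w.countVar = 1 ∧ ∀ i : Fin m, w.countConst i = 1

/-- Evaluation of a word in the split octonions, substituting `a i` for the letter `aᵢ`
and `x` for the variable letter. -/
def OctWord.eval {m : ℕ} (a : Fin m → Octo F) (x : Octo F) : OctWord m → Octo F
  | .var => x
  | .const i => a i
  | .mul w₁ w₂ => octMul (OctWord.eval a x w₁) (OctWord.eval a x w₂)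

/-- The solution set of the linear monomial equation `w(a₁, …, aₘ, x) = c`. -/
def octSolW {m : ℕ} (w : OctWord m) (a : Fin m → Octo F) (c : Octo F) : Set (Octo F) :=
  {x : Octo F | OctWord.eval a x w = c}

/-! Write `x ↦ w(a, x)` as a composite `L` of left and right multiplications by the
subproducts of `w` that do not contain `x`. Since `n` is multiplicative and
`x̄ (x y) = n(x) y = (y x) x̄`, a multiplication by `b` is bijective when `n(b) ≠ 0`, while for
`n(b) = 0` its range is a subspace on which `n` vanishes, hence isotropic for the
nondegenerate polar form of `n` and of dimension at most `4`. So `L` is bijective when every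
`n(aᵢ) ≠ 0`, and otherwise has a kernel of dimension at least `4`, whose translates are the
nonempty solution sets. -/

open Module

section LinearMapFacts

variable {K U V W : Type*} [Field K] [AddCommGroup U] [Module K U] [AddCommGroup V] [Module K V]
  [AddCommGroup W] [Module K W]

lemma LinearMap.finrank_range_comp_le_left [FiniteDimensional K W] (f : V →ₗ[K] W)
    (g : U →ₗ[K] V) : finrank K (range (f ∘ₗ g)) ≤ finrank K (range f) :=
  Submodule.finrank_mono (range_comp_le_range g f)

lemma LinearMap.finrank_range_comp_le_right [FiniteDimensional K V] (f : V →ₗ[K] W)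
    (g : U →ₗ[K] V) : finrank K (range (f ∘ₗ g)) ≤ finrank K (range g) := by
  rw [range_comp]
  exact Submodule.finrank_map_le f _

lemma LinearMap.setOf_apply_eq_eq_image_ker (f : V →ₗ[K] W) (x₀ : V) :
    {x | f x = f x₀} = (· + x₀) '' (ker f : Set V) := by
  ext x
  refine ⟨fun hx => ⟨x - x₀, ?_, sub_add_cancel x x₀⟩, ?_⟩
  · rw [SetLike.mem_coe, mem_ker, map_sub, sub_eq_zero]
    exact hx
  rintro ⟨k, hk, rfl⟩
  show f (k + x₀) = f x₀
  rw [map_add, mem_ker.mp hk, zero_add]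

end LinearMapFacts

lemma octNorm_octMul (x y : Octo F) : octNorm (octMul x y) = octNorm x * octNorm y := by
  simp [octNorm, octMul]; ring

lemma octMul_octConj_octMul (x y : Octo F) :
    octMul (octConj x) (octMul x y) = octNorm x • y := by
  ext i; fin_cases i <;> simp [octMul, octConj, octNorm] <;> ring

lemma octMul_octMul_octConj (x y : Octo F) :
    octMul (octMul y x) (octConj x) = octNorm x • y := by
  ext i; fin_cases i <;> simp [octMul, octConj, octNorm] <;> ring

lemma octMul_add_left (x y z : Octo F) : octMul (x + y) z = octMul x z + octMul y z := by
  ext i; fin_cases i <;> simp [octMul] <;> ring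

lemma octMul_add_right (x y z : Octo F) : octMul x (y + z) = octMul x y + octMul x z := by
  ext i; fin_cases i <;> simp [octMul] <;> ring

lemma octMul_smul_left (r : F) (x y : Octo F) : octMul (r • x) y = r • octMul x y := by
  ext i; fin_cases i <;> simp [octMul] <;> ring

lemma octMul_smul_right (r : F) (x y : Octo F) : octMul x (r • y) = r • octMul x y := by
  ext i; fin_cases i <;> simp [octMul] <;> ring

variable (F) in
def octMulₗ : Octo F →ₗ[F] Octo F →ₗ[F] Octo F :=
  LinearMap.mk₂ F octMul octMul_add_left octMul_smul_left octMul_add_right octMul_smul_right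

@[simp] lemma octMulₗ_apply (x y : Octo F) : octMulₗ F x y = octMul x y := rfl

variable (F) in
def octPolar : LinearMap.BilinForm F (Octo F) :=
  LinearMap.mk₂ F
    (fun x y => x 0 * y 7 + x 7 * y 0 - (x 1 * y 4 + x 4 * y 1) - (x 2 * y 5 + x 5 * y 2)
      - (x 3 * y 6 + x 6 * y 3))
    (fun _ _ _ => by simp; ring) (fun _ _ _ => by simp; ring)
    (fun _ _ _ => by simp; ring) (fun _ _ _ => by simp; ring)

lemma octNorm_add (x y : Octo F) :
    octNorm (x + y) = octNorm x + octNorm y + octPolar F x y := by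
  simp [octNorm, octPolar]; ring

lemma octPolar_nondegenerate : (octPolar F).Nondegenerate := by
  refine .ofSeparatingLeft fun x hx => ?_
  have h0 := hx octE2; have h1 := hx octV1; have h2 := hx octV2; have h3 := hx octV3
  have h4 := hx octU1; have h5 := hx octU2; have h6 := hx octU3; have h7 := hx octE1
  simp [octPolar, octE1, octE2, octU1, octU2, octU3, octV1, octV2, octV3]
    at h0 h1 h2 h3 h4 h5 h6 h7
  ext i; fin_cases i <;> assumption

lemma finrank_le_four_of_octNorm_eq_zero (W : Submodule F (Octo F))
    (hW : ∀ x ∈ W, octNorm x = 0) : finrank F W ≤ 4 := by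
  have hiso : W ≤ (octPolar F).orthogonal W := fun y hy x hx => by
    have h := octNorm_add x y
    rw [hW _ (W.add_mem hx hy), hW x hx, hW y hy] at h
    linear_combination -h
  have h := Submodule.finrank_mono hiso
  rw [LinearMap.BilinForm.finrank_orthogonal octPolar_nondegenerate, finrank_fin_fun] at h
  omega

lemma bijective_octMulₗ {b : Octo F} (hb : octNorm b ≠ 0) :
    Function.Bijective (octMulₗ F b) := by
  have hinj : Function.Injective (octMulₗ F b) := fun x y h => by
    have h' := congrArg (octMul (octConj b)) h
    simp only [octMulₗ_apply] at h'
    rwa [octMul_octConj_octMul, octMul_octConj_octMul, smul_right_inj hb] at h'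
  exact ⟨hinj, LinearMap.injective_iff_surjective.mp hinj⟩

lemma bijective_flip_octMulₗ {b : Octo F} (hb : octNorm b ≠ 0) :
    Function.Bijective ((octMulₗ F).flip b) := by
  have hinj : Function.Injective ((octMulₗ F).flip b) := fun x y h => by
    have h' := congrArg (octMul · (octConj b)) h
    simp only [LinearMap.flip_apply, octMulₗ_apply] at h'
    rwa [octMul_octMul_octConj, octMul_octMul_octConj, smul_right_inj hb] at h'
  exact ⟨hinj, LinearMap.injective_iff_surjective.mp hinj⟩

lemma finrank_range_octMulₗ_le {b : Octo F} (hb : octNorm b = 0) :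
    finrank F (LinearMap.range (octMulₗ F b)) ≤ 4 :=
  finrank_le_four_of_octNorm_eq_zero _ <| by
    rintro _ ⟨x, rfl⟩
    rw [octMulₗ_apply, octNorm_octMul, hb, zero_mul]

lemma finrank_range_flip_octMulₗ_le {b : Octo F} (hb : octNorm b = 0) :
    finrank F (LinearMap.range ((octMulₗ F).flip b)) ≤ 4 :=
  finrank_le_four_of_octNorm_eq_zero _ <| by
    rintro _ ⟨x, rfl⟩
    rw [LinearMap.flip_apply, octMulₗ_apply, octNorm_octMul, hb, mul_zero]

namespace OctWord

variable {m : ℕ} (a : Fin m → Octo F)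

/-- The linear map `x ↦ w(a, x)` when `x` occurs exactly once in `w` (junk otherwise). -/
def evalₗ : OctWord m → Octo F →ₗ[F] Octo F
  | var => LinearMap.id
  | const _ => 0
  | mul w₁ w₂ =>
      if w₂.countVar = 0 then (octMulₗ F).flip (w₂.eval a 0) ∘ₗ w₁.evalₗ
      else octMulₗ F (w₁.eval a 0) ∘ₗ w₂.evalₗ

variable {a}

lemma evalₗ_mul_of_countVar_eq_zero {w₁ w₂ : OctWord m} (h : w₂.countVar = 0) :
    (mul w₁ w₂).evalₗ a = (octMulₗ F).flip (w₂.eval a 0) ∘ₗ w₁.evalₗ a := by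
  rw [evalₗ, if_pos h]

lemma evalₗ_mul_of_countVar_ne_zero {w₁ w₂ : OctWord m} (h : w₂.countVar ≠ 0) :
    (mul w₁ w₂).evalₗ a = octMulₗ F (w₁.eval a 0) ∘ₗ w₂.evalₗ a := by
  rw [evalₗ, if_neg h]

lemma eval_eq_of_countVar_eq_zero {w : OctWord m} (hw : w.countVar = 0) (x y : Octo F) :
    w.eval a x = w.eval a y := by
  induction w with
  | var => simp [countVar] at hw
  | const i => rfl
  | mul w₁ w₂ ih₁ ih₂ =>
    simp only [countVar, Nat.add_eq_zero_iff] at hw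
    simp only [eval, ih₁ hw.1, ih₂ hw.2]

lemma eval_eq_evalₗ {w : OctWord m} (hw : w.countVar = 1) (x : Octo F) :
    w.eval a x = w.evalₗ a x := by
  induction w with
  | var => rfl
  | const i => simp [countVar] at hw
  | mul w₁ w₂ ih₁ ih₂ =>
    simp only [countVar] at hw
    by_cases h₂ : w₂.countVar = 0
    · simp only [eval, evalₗ_mul_of_countVar_eq_zero h₂, LinearMap.comp_apply,
        LinearMap.flip_apply, octMulₗ_apply, ih₁ (by omega),
        eval_eq_of_countVar_eq_zero h₂ x 0]
    · simp only [eval, evalₗ_mul_of_countVar_ne_zero h₂, LinearMap.comp_apply, octMulₗ_apply,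
        ih₂ (by omega), eval_eq_of_countVar_eq_zero (w := w₁) (by omega) x 0]

lemma octNorm_eval_ne_zero (ha : ∀ i, octNorm (a i) ≠ 0) {w : OctWord m}
    (hw : w.countVar = 0) (x : Octo F) : octNorm (w.eval a x) ≠ 0 := by
  induction w with
  | var => simp [countVar] at hw
  | const i => exact ha i
  | mul w₁ w₂ ih₁ ih₂ =>
    simp only [countVar, Nat.add_eq_zero_iff] at hw
    rw [eval, octNorm_octMul]
    exact mul_ne_zero (ih₁ hw.1) (ih₂ hw.2)

lemma octNorm_eval_eq_zero {i : Fin m} (hi : octNorm (a i) = 0) {w : OctWord m}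
    (hw : w.countConst i ≠ 0) (x : Octo F) : octNorm (w.eval a x) = 0 := by
  induction w with
  | var => simp [countConst] at hw
  | const j =>
    obtain rfl : j = i := by by_contra h; simp [countConst, h] at hw
    exact hi
  | mul w₁ w₂ ih₁ ih₂ =>
    simp only [countConst] at hw
    rw [eval, octNorm_octMul]
    by_cases h₁ : w₁.countConst i = 0
    · rw [ih₂ (by omega), mul_zero]
    · rw [ih₁ h₁, zero_mul]

lemma bijective_evalₗ (ha : ∀ i, octNorm (a i) ≠ 0) {w : OctWord m} (hw : w.countVar = 1) :
    Function.Bijective (w.evalₗ a) := by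
  induction w with
  | var => exact Function.bijective_id
  | const i => simp [countVar] at hw
  | mul w₁ w₂ ih₁ ih₂ =>
    simp only [countVar] at hw
    by_cases h₂ : w₂.countVar = 0
    · rw [evalₗ_mul_of_countVar_eq_zero h₂, LinearMap.coe_comp]
      exact (bijective_flip_octMulₗ (octNorm_eval_ne_zero ha h₂ 0)).comp (ih₁ (by omega))
    · rw [evalₗ_mul_of_countVar_ne_zero h₂, LinearMap.coe_comp]
      exact (bijective_octMulₗ (octNorm_eval_ne_zero ha (by omega) 0)).comp (ih₂ (by omega))

lemma finrank_range_evalₗ_le {i : Fin m} (hi : octNorm (a i) = 0) {w : OctWord m}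
    (hw : w.countVar = 1) (hc : w.countConst i ≠ 0) :
    finrank F (LinearMap.range (w.evalₗ a)) ≤ 4 := by
  induction w with
  | var => simp [countConst] at hc
  | const j => simp [countVar] at hw
  | mul w₁ w₂ ih₁ ih₂ =>
    simp only [countVar] at hw
    simp only [countConst] at hc
    by_cases h₂ : w₂.countVar = 0
    · rw [evalₗ_mul_of_countVar_eq_zero h₂]
      by_cases hc₂ : w₂.countConst i = 0
      · exact (LinearMap.finrank_range_comp_le_right _ _).trans (ih₁ (by omega) (by omega))
      · exact (LinearMap.finrank_range_comp_le_left _ _).trans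
          (finrank_range_flip_octMulₗ_le (octNorm_eval_eq_zero hi hc₂ 0))
    · rw [evalₗ_mul_of_countVar_ne_zero h₂]
      by_cases hc₁ : w₁.countConst i = 0
      · exact (LinearMap.finrank_range_comp_le_right _ _).trans (ih₂ (by omega) (by omega))
      · exact (LinearMap.finrank_range_comp_le_left _ _).trans
          (finrank_range_octMulₗ_le (octNorm_eval_eq_zero hi hc₁ 0))

end OctWord

lemma IsFlat.nonempty {d : ℕ} {X : Set (Octo F)} (h : IsFlat d X) : X.Nonempty := by
  obtain ⟨V, x, -, rfl⟩ := h
  exact ⟨0 + x, 0, V.zero_mem, rfl⟩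

lemma IsFlat.not_subsingleton {d : ℕ} {X : Set (Octo F)} (h : IsFlat d X) (hd : 1 ≤ d) :
    ¬ X.Subsingleton := by
  obtain ⟨V, x, hV, rfl⟩ := h
  rw [(add_left_injective x).subsingleton_image_iff]
  intro hsub
  have : V = ⊥ := (Submodule.eq_bot_iff V).mpr fun v hv => hsub hv V.zero_mem
  rw [this, finrank_bot] at hV
  omega

lemma IsFlat.ne_univ {d : ℕ} {X : Set (Octo F)} (h : IsFlat d X) (hd : d < 8) :
    X ≠ Set.univ := by
  obtain ⟨V, x, hV, rfl⟩ := h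
  intro huniv
  have : V = ⊤ := Submodule.eq_top_iff'.mpr fun y => by
    obtain ⟨v, hv, hvy⟩ := huniv ▸ Set.mem_univ (y + x)
    rwa [← add_right_cancel hvy]
  rw [this, finrank_top, finrank_fin_fun] at hV
  omega

lemma setOf_apply_eq_cases (f : Octo F →ₗ[F] Octo F)
    (hf : finrank F (LinearMap.range f) ≤ 4) (c : Octo F) :
    {x | f x = c} = ∅ ∨ (∃ r, 4 ≤ r ∧ r ≤ 7 ∧ IsFlat r {x | f x = c}) ∨
      {x | f x = c} = Set.univ := by
  by_cases hc : c ∈ LinearMap.range f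
  · obtain ⟨x₀, rfl⟩ := hc
    have hker := f.finrank_range_add_finrank_ker
    rw [finrank_fin_fun] at hker
    rw [LinearMap.setOf_apply_eq_eq_image_ker]
    by_cases h8 : finrank F (LinearMap.ker f) = 8
    · rw [Submodule.eq_top_of_finrank_eq (h8.trans (finrank_fin_fun F).symm), Submodule.top_coe,
        Set.image_univ_of_surjective (add_right_surjective x₀)]
      exact Or.inr (Or.inr rfl)
    · have := Submodule.finrank_le (LinearMap.ker f)
      rw [finrank_fin_fun] at this
      exact Or.inr (Or.inl ⟨_, by omega, by omega, _, x₀, rfl, rfl⟩)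
  · exact Or.inl (Set.eq_empty_of_forall_notMem fun x hx => hc ⟨x, hx⟩)

lemma exactly_one_of_cases {X : Set (Octo F)}
    (h : X = ∅ ∨ (∃ x₀, X = {x₀}) ∨
      (∃ r, 4 ≤ r ∧ r ≤ 7 ∧ IsFlat r X) ∨ X = Set.univ) :
    (X = ∅ ∧ ¬ (∃ x₀ : Octo F, X = {x₀}) ∧
        (¬ ∃ r : ℕ, 4 ≤ r ∧ r ≤ 7 ∧ IsFlat r X) ∧ ¬ X = Set.univ) ∨
      (¬ X = ∅ ∧ (∃ x₀ : Octo F, X = {x₀}) ∧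
        (¬ ∃ r : ℕ, 4 ≤ r ∧ r ≤ 7 ∧ IsFlat r X) ∧ ¬ X = Set.univ) ∨
      (¬ X = ∅ ∧ ¬ (∃ x₀ : Octo F, X = {x₀}) ∧
        (∃ r : ℕ, 4 ≤ r ∧ r ≤ 7 ∧ IsFlat r X) ∧ ¬ X = Set.univ) ∨
      (¬ X = ∅ ∧ ¬ (∃ x₀ : Octo F, X = {x₀}) ∧
        (¬ ∃ r : ℕ, 4 ≤ r ∧ r ≤ 7 ∧ IsFlat r X) ∧ X = Set.univ) := by
  have univ_not_subsingleton : ¬ (Set.univ : Set (Octo F)).Subsingleton :=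
    fun h => not_subsingleton (Octo F) (Set.subsingleton_univ_iff.mp h)
  have h12 : X = ∅ → ¬ ∃ x₀, X = {x₀} := by
    rintro rfl ⟨x₀, h⟩; exact Set.singleton_ne_empty x₀ h.symm
  have h13 : X = ∅ → ¬ ∃ r, 4 ≤ r ∧ r ≤ 7 ∧ IsFlat r X := by
    rintro rfl ⟨r, -, -, hf⟩; exact Set.not_nonempty_empty hf.nonempty
  have h14 : X = ∅ → X ≠ Set.univ := by
    rintro rfl; exact Set.empty_ne_univ
  have h23 : (∃ x₀, X = {x₀}) → ¬ ∃ r, 4 ≤ r ∧ r ≤ 7 ∧ IsFlat r X := by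
    rintro ⟨x₀, rfl⟩ ⟨r, hr, -, hf⟩
    exact hf.not_subsingleton (by omega) Set.subsingleton_singleton
  have h24 : (∃ x₀, X = {x₀}) → X ≠ Set.univ := by
    rintro ⟨x₀, rfl⟩ h; exact univ_not_subsingleton (h ▸ Set.subsingleton_singleton)
  have h34 : (∃ r, 4 ≤ r ∧ r ≤ 7 ∧ IsFlat r X) → X ≠ Set.univ := by
    rintro ⟨r, -, hr, hf⟩; exact hf.ne_univ (by omega)
  rcases h with h | h | h | h
  · exact Or.inl ⟨h, h12 h, h13 h, h14 h⟩
  · exact Or.inr (Or.inl ⟨fun h' => h12 h' h, h, h23 h, h24 h⟩)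
  · exact Or.inr (Or.inr (Or.inl ⟨fun h' => h13 h' h, fun h' => h23 h' h, h, h34 h⟩))
  · exact Or.inr (Or.inr (Or.inr ⟨fun h' => h14 h' h, fun h' => h24 h' h,
      fun h' => h34 h' h, h⟩))

section SolutionSet

variable {m : ℕ} {a : Fin m → Octo F} {w : OctWord m}

lemma octSolW_eq_setOf_evalₗ (hw : w.countVar = 1) (c : Octo F) :
    octSolW w a c = {x | w.evalₗ a x = c} := by
  simp only [octSolW, OctWord.eval_eq_evalₗ hw]

lemma exists_octSolW_eq_singleton_of_octNorm_ne_zero (hw : w.countVar = 1)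
    (ha : ∀ i, octNorm (a i) ≠ 0) (c : Octo F) : ∃ x₀, octSolW w a c = {x₀} := by
  obtain ⟨x₀, hx₀⟩ := (OctWord.bijective_evalₗ ha hw).surjective c
  refine ⟨x₀, ?_⟩
  rw [octSolW_eq_setOf_evalₗ hw, ← hx₀]
  exact Set.ext fun x => (OctWord.bijective_evalₗ ha hw).injective.eq_iff

lemma octSolW_cases_of_octNorm_eq_zero (hw : w.countVar = 1) {i : Fin m}
    (hc : w.countConst i ≠ 0) (hi : octNorm (a i) = 0) (c : Octo F) :
    octSolW w a c = ∅ ∨ (∃ r, 4 ≤ r ∧ r ≤ 7 ∧ IsFlat r (octSolW w a c)) ∨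
      octSolW w a c = Set.univ := by
  rw [octSolW_eq_setOf_evalₗ hw]
  exact setOf_apply_eq_cases _ (OctWord.finrank_range_evalₗ_le hi hw hc) c

lemma octSolW_cases (hw : w.Multilinear) (c : Octo F) :
    octSolW w a c = ∅ ∨ (∃ x₀, octSolW w a c = {x₀}) ∨
      (∃ r, 4 ≤ r ∧ r ≤ 7 ∧ IsFlat r (octSolW w a c)) ∨ octSolW w a c = Set.univ := by
  by_cases ha : ∀ i, octNorm (a i) ≠ 0
  · exact Or.inr (Or.inl (exists_octSolW_eq_singleton_of_octNorm_ne_zero hw.1 ha c))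
  · obtain ⟨i, hi⟩ : ∃ i, octNorm (a i) = 0 := by simpa using ha
    rcases octSolW_cases_of_octNorm_eq_zero hw.1 (by simp [hw.2 i]) hi c with h | h | h
    exacts [Or.inl h, Or.inr (Or.inr (Or.inl h)), Or.inr (Or.inr (Or.inr h))]

lemma exists_octSolW_eq_singleton_iff (hw : w.Multilinear) (c : Octo F) :
    (∃ x₀, octSolW w a c = {x₀}) ↔ ∀ i, octNorm (a i) ≠ 0 := by
  refine ⟨fun ⟨x₀, hx₀⟩ i hi => ?_,
    fun ha => exists_octSolW_eq_singleton_of_octNorm_ne_zero hw.1 ha c⟩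
  have hsub : (octSolW w a c).Subsingleton := hx₀ ▸ Set.subsingleton_singleton
  rcases octSolW_cases_of_octNorm_eq_zero hw.1 (by simp [hw.2 i]) hi c
    with h | ⟨r, hr, -, hf⟩ | h
  · exact Set.singleton_ne_empty x₀ (hx₀ ▸ h)
  · exact hf.not_subsingleton (by omega) hsub
  · exact not_subsingleton (Octo F) (Set.subsingleton_univ_iff.mp (h ▸ hsub))

end SolutionSet

lemma octU1_ne_zero : (octU1 : Octo F) ≠ 0 := fun h => by simpa [octU1] using congrFun h 1

lemma octOne_ne_zero : (octOne : Octo F) ≠ 0 := fun h => by simpa [octOne] using congrFun h 0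

lemma octMul_octU1_octOne_ne_zero : octMul octU1 octOne ≠ (0 : Octo F) := by
  intro h; simpa [octMul, octU1, octOne] using congrFun h 1

lemma exists_monomial_octSolW_eq_empty :
    ∃ (m' : ℕ) (a' : Fin m' → Octo F) (c' : Octo F) (w' : OctWord m'),
      1 ≤ m' ∧ (∀ i, a' i ≠ 0) ∧ w'.Multilinear ∧ octSolW w' a' c' = ∅ := by
  refine ⟨1, ![octU1], octOne, .mul (.const 0) .var, le_rfl, Fin.forall_fin_one.mpr octU1_ne_zero,
    ⟨rfl, fun i => by fin_cases i; rfl⟩, Set.eq_empty_of_forall_notMem fun x hx => ?_⟩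
  simpa [octSolW, OctWord.eval, octMul, octU1, octOne] using congrFun hx 7

lemma exists_monomial_octSolW_eq_singleton :
    ∃ (m' : ℕ) (a' : Fin m' → Octo F) (c' : Octo F) (w' : OctWord m'),
      1 ≤ m' ∧ (∀ i, a' i ≠ 0) ∧ w'.Multilinear ∧
      ∃ x₀ : Octo F, octSolW w' a' c' = {x₀} := by
  refine ⟨1, ![octOne], 0, .mul (.const 0) .var, le_rfl, Fin.forall_fin_one.mpr octOne_ne_zero,
    ⟨rfl, fun i => by fin_cases i; rfl⟩,
    exists_octSolW_eq_singleton_of_octNorm_ne_zero rfl ?_ 0⟩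
  simp [octNorm, octOne]

lemma exists_monomial_octSolW_isFlat :
    ∃ (m' : ℕ) (a' : Fin m' → Octo F) (c' : Octo F) (w' : OctWord m'),
      1 ≤ m' ∧ (∀ i, a' i ≠ 0) ∧ w'.Multilinear ∧
      ∃ r : ℕ, 4 ≤ r ∧ r ≤ 7 ∧ IsFlat r (octSolW w' a' c') := by
  have hw : (OctWord.mul (.const 0) .var : OctWord 1).Multilinear :=
    ⟨rfl, fun i => by fin_cases i; rfl⟩
  refine ⟨1, ![octU1], 0, _, le_rfl, Fin.forall_fin_one.mpr octU1_ne_zero, hw, ?_⟩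
  rcases octSolW_cases hw (a := ![(octU1 : Octo F)]) 0 with h | h | h | h
  · have h0 : (0 : Octo F) ∈ octSolW (.mul (.const 0) .var) ![octU1] 0 := by
      ext i; fin_cases i <;> simp [OctWord.eval, octMul]
    simp [h] at h0
  · exact absurd ((exists_octSolW_eq_singleton_iff hw 0).mp h 0) (by simp [octNorm, octU1])
  · exact h
  · exact absurd (h ▸ Set.mem_univ octOne) octMul_octU1_octOne_ne_zero

lemma exists_monomial_octSolW_eq_univ :
    ∃ (m' : ℕ) (a' : Fin m' → Octo F) (c' : Octo F) (w' : OctWord m'),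
      1 ≤ m' ∧ (∀ i, a' i ≠ 0) ∧ w'.Multilinear ∧ octSolW w' a' c' = Set.univ := by
  refine ⟨2, ![octU1, octU1], 0, .mul (.mul (.const 0) (.const 1)) .var, by omega,
    Fin.forall_fin_two.mpr ⟨octU1_ne_zero, octU1_ne_zero⟩,
    ⟨rfl, fun i => by fin_cases i <;> rfl⟩, Set.eq_univ_of_forall fun x => ?_⟩
  ext i; fin_cases i <;> simp [OctWord.eval, octMul, octU1]

theorem stmt_18_general {m : ℕ} (a : Fin m → Octo F) (c : Octo F) (w : OctWord m)
    (hw : w.Multilinear) :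
    ((octSolW w a c = ∅ ∧ ¬ (∃ x₀ : Octo F, octSolW w a c = {x₀}) ∧
        (¬ ∃ r : ℕ, 4 ≤ r ∧ r ≤ 7 ∧ IsFlat r (octSolW w a c)) ∧
        ¬ octSolW w a c = Set.univ) ∨
      (¬ octSolW w a c = ∅ ∧ (∃ x₀ : Octo F, octSolW w a c = {x₀}) ∧
        (¬ ∃ r : ℕ, 4 ≤ r ∧ r ≤ 7 ∧ IsFlat r (octSolW w a c)) ∧
        ¬ octSolW w a c = Set.univ) ∨
      (¬ octSolW w a c = ∅ ∧ ¬ (∃ x₀ : Octo F, octSolW w a c = {x₀}) ∧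
        (∃ r : ℕ, 4 ≤ r ∧ r ≤ 7 ∧ IsFlat r (octSolW w a c)) ∧
        ¬ octSolW w a c = Set.univ) ∨
      (¬ octSolW w a c = ∅ ∧ ¬ (∃ x₀ : Octo F, octSolW w a c = {x₀}) ∧
        (¬ ∃ r : ℕ, 4 ≤ r ∧ r ≤ 7 ∧ IsFlat r (octSolW w a c)) ∧
        octSolW w a c = Set.univ)) ∧
    (∃ (m' : ℕ) (a' : Fin m' → Octo F) (c' : Octo F) (w' : OctWord m'),
      1 ≤ m' ∧ (∀ i, a' i ≠ 0) ∧ w'.Multilinear ∧ octSolW w' a' c' = ∅) ∧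
    (∃ (m' : ℕ) (a' : Fin m' → Octo F) (c' : Octo F) (w' : OctWord m'),
      1 ≤ m' ∧ (∀ i, a' i ≠ 0) ∧ w'.Multilinear ∧ ∃ x₀ : Octo F, octSolW w' a' c' = {x₀}) ∧
    (∃ (m' : ℕ) (a' : Fin m' → Octo F) (c' : Octo F) (w' : OctWord m'),
      1 ≤ m' ∧ (∀ i, a' i ≠ 0) ∧ w'.Multilinear ∧
      ∃ r : ℕ, 4 ≤ r ∧ r ≤ 7 ∧ IsFlat r (octSolW w' a' c')) ∧
    (∃ (m' : ℕ) (a' : Fin m' → Octo F) (c' : Octo F) (w' : OctWord m'),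
      1 ≤ m' ∧ (∀ i, a' i ≠ 0) ∧ w'.Multilinear ∧ octSolW w' a' c' = Set.univ) ∧
    ((∃ x₀ : Octo F, octSolW w a c = {x₀}) ↔ ∀ i, octNorm (a i) ≠ 0) :=
  ⟨exactly_one_of_cases (octSolW_cases hw c), exists_monomial_octSolW_eq_empty,
    exists_monomial_octSolW_eq_singleton, exists_monomial_octSolW_isFlat,
    exists_monomial_octSolW_eq_univ,
    exists_octSolW_eq_singleton_iff hw c⟩

/-- The solution set of a linear monomial equation `w(a₁, …, aₘ, x) = c` with nonzero
coefficients is empty, a singleton, a flat of dimension `4 ≤ r ≤ 7`, or all of `O`;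
each case occurs; and there is a unique solution iff all coefficients are invertible. -/
theorem stmt_18 [IsAlgClosed F] {m : ℕ} (hm : 1 ≤ m) (a : Fin m → Octo F)
    (ha : ∀ i, a i ≠ 0) (c : Octo F) (w : OctWord m) (hw : w.Multilinear) :
    ((octSolW w a c = ∅ ∧ ¬ (∃ x₀ : Octo F, octSolW w a c = {x₀}) ∧
        (¬ ∃ r : ℕ, 4 ≤ r ∧ r ≤ 7 ∧ IsFlat r (octSolW w a c)) ∧
        ¬ octSolW w a c = Set.univ) ∨
      (¬ octSolW w a c = ∅ ∧ (∃ x₀ : Octo F, octSolW w a c = {x₀}) ∧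
        (¬ ∃ r : ℕ, 4 ≤ r ∧ r ≤ 7 ∧ IsFlat r (octSolW w a c)) ∧
        ¬ octSolW w a c = Set.univ) ∨
      (¬ octSolW w a c = ∅ ∧ ¬ (∃ x₀ : Octo F, octSolW w a c = {x₀}) ∧
        (∃ r : ℕ, 4 ≤ r ∧ r ≤ 7 ∧ IsFlat r (octSolW w a c)) ∧
        ¬ octSolW w a c = Set.univ) ∨
      (¬ octSolW w a c = ∅ ∧ ¬ (∃ x₀ : Octo F, octSolW w a c = {x₀}) ∧
        (¬ ∃ r : ℕ, 4 ≤ r ∧ r ≤ 7 ∧ IsFlat r (octSolW w a c)) ∧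
        octSolW w a c = Set.univ)) ∧
    (∃ (m' : ℕ) (a' : Fin m' → Octo F) (c' : Octo F) (w' : OctWord m'),
      1 ≤ m' ∧ (∀ i, a' i ≠ 0) ∧ w'.Multilinear ∧ octSolW w' a' c' = ∅) ∧
    (∃ (m' : ℕ) (a' : Fin m' → Octo F) (c' : Octo F) (w' : OctWord m'),
      1 ≤ m' ∧ (∀ i, a' i ≠ 0) ∧ w'.Multilinear ∧ ∃ x₀ : Octo F, octSolW w' a' c' = {x₀}) ∧
    (∃ (m' : ℕ) (a' : Fin m' → Octo F) (c' : Octo F) (w' : OctWord m'),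
      1 ≤ m' ∧ (∀ i, a' i ≠ 0) ∧ w'.Multilinear ∧
      ∃ r : ℕ, 4 ≤ r ∧ r ≤ 7 ∧ IsFlat r (octSolW w' a' c')) ∧
    (∃ (m' : ℕ) (a' : Fin m' → Octo F) (c' : Octo F) (w' : OctWord m'),
      1 ≤ m' ∧ (∀ i, a' i ≠ 0) ∧ w'.Multilinear ∧ octSolW w' a' c' = Set.univ) ∧
    ((∃ x₀ : Octo F, octSolW w a c = {x₀}) ↔ ∀ i, octNorm (a i) ≠ 0) :=
  stmt_18_general a c w hw
end
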